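/- Let H be a finite simple graph whose vertex set can be partitioned into k independent sets (anticliques) of sizes x_1, x_2, …, x_k. Then ρ(H) ≥ Σ_{i=1}^{k} x_i(x_i + 1)/2. -/

import Mathlib

/-!
Colour a graph `G` greedily: colour class `j` is a maximum independent set of the subgraph left
after removing the classes `0, …, j - 1`. Take a rainbow induced copy of `H` in `G`. If an anticlique
of `H` has `r` vertices whose colours are at least the colour `j` of one of them, their images form an
independent set of colours `≥ j`, so class `j` has at least `r` vertices. Ranking the `x` vertices of
an anticlique by colour, the classes they occupy therefore have at least `x, x - 1, …, 1` vertices;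
all these classes are distinct, so `|G| ≥ ∑ᵢ xᵢ (xᵢ + 1) / 2`. Finally `ρ(H)` is attained, since the
lexicographic product `H[K_{|H|}]` arrows `H` by Hall's theorem.
-/

/-- `ArrowsR G H` (written `G →r H`) means: every proper vertex coloring of `G`
contains a rainbow induced subgraph isomorphic to `H`, i.e. an induced copy of `H`
(a graph embedding) whose vertices receive pairwise distinct colors. -/
def ArrowsR {α β : Type} (G : SimpleGraph α) (H : SimpleGraph β) : Prop :=
  ∀ c : α → ℕ, (∀ u v : α, G.Adj u v → c u ≠ c v) →
    ∃ f : H ↪g G, Function.Injective fun h => c (f h)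

/-- `rho H` is the minimum number of vertices of a graph `G` with `G →r H`. -/
noncomputable def rho {β : Type} (H : SimpleGraph β) : ℕ :=
  sInf {m : ℕ | ∃ G : SimpleGraph (Fin m), ArrowsR G H}

open Finset

theorem Finset.sum_card_filter_le_eq {α β : Type*} [LinearOrder β] (s : Finset α) {g : α → β}
    (hg : Set.InjOn g s) : ∑ v ∈ s, #{w ∈ s | g v ≤ g w} = #s * (#s + 1) / 2 := by
  classical
  have hswap : ∑ v ∈ s, #{w ∈ s | g v ≤ g w} = ∑ v ∈ s, #{w ∈ s | g w ≤ g v} := by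
    simp only [card_filter]
    exact sum_comm
  have hpair : ∀ v ∈ s, #{w ∈ s | g v ≤ g w} + #{w ∈ s | g w ≤ g v} = #s + 1 := by
    intro v hv
    have hunion : {w ∈ s | g v ≤ g w} ∪ {w ∈ s | g w ≤ g v} = s := by
      rw [← filter_or]
      exact filter_true_of_mem fun w _ => le_total _ _
    have hinter : {w ∈ s | g v ≤ g w} ∩ {w ∈ s | g w ≤ g v} = {v} := by
      rw [← filter_and]
      ext w
      simp only [mem_filter, mem_singleton]
      constructor
      · rintro ⟨hw, h₁, h₂⟩
        exact hg hw hv (le_antisymm h₂ h₁)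
      · rintro rfl
        exact ⟨hv, le_rfl, le_rfl⟩
    rw [← card_union_add_card_inter, hunion, hinter, card_singleton]
  have htwice : 2 * ∑ v ∈ s, #{w ∈ s | g v ≤ g w} = #s * (#s + 1) := by
    rw [two_mul]
    nth_rewrite 2 [hswap]
    rw [← sum_add_distrib, sum_congr rfl hpair, sum_const, smul_eq_mul]
  omega

theorem Finset.sum_card_fiber_comp_le_card {V A M : Type*} [Fintype V] [Fintype A]
    [DecidableEq M] (c : A → M) {g : V → A} (hg : Function.Injective (c ∘ g)) :
    ∑ v, #{a | c a = c (g v)} ≤ Fintype.card A :=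
  calc ∑ v, #{a | c a = c (g v)} = ∑ j ∈ univ.image (c ∘ g), #{a | c a = j} :=
        (sum_image (f := fun j => #{a | c a = j}) fun _ _ _ _ h => hg h).symm
    _ ≤ ∑ j ∈ univ.image c, #{a | c a = j} :=
        sum_le_sum_of_subset (image_subset_iff.mpr fun _ _ => mem_image_of_mem c (mem_univ _))
    _ = Fintype.card A := (card_eq_sum_card_image c univ).symm

namespace SimpleGraph

section GreedyColoring

variable {A : Type*} (G : SimpleGraph A)

theorem exists_maximum_isIndepSet_subset (R : Finset A) :
    ∃ M ⊆ R, G.IsIndepSet (M : Set A) ∧ ∀ s ⊆ R, G.IsIndepSet (s : Set A) → #s ≤ #M := by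
  classical
  obtain ⟨M, hM, hmax⟩ := exists_max_image
    (R.powerset.filter fun s : Finset A => G.IsIndepSet (s : Set A)) card ⟨∅, by simp⟩
  rw [mem_filter, mem_powerset] at hM
  exact ⟨M, hM.1, hM.2, fun s hsR hs => hmax s (by simp [hsR, hs])⟩

theorem exists_greedy_coloring [DecidableEq A] (R : Finset A) :
    ∃ c : A → ℕ, (∀ u ∈ R, ∀ v ∈ R, G.Adj u v → c u ≠ c v) ∧
      ∀ j, ∀ s ⊆ R, G.IsIndepSet (s : Set A) → (∀ a ∈ s, j ≤ c a) →
        #s ≤ #{a ∈ R | c a = j} := by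
  induction R using Finset.strongInduction with
  | H R ih =>
  obtain rfl | ⟨r, hr⟩ := R.eq_empty_or_nonempty
  · exact ⟨0, by simp, fun j s hs _ _ => by simp [subset_empty.mp hs]⟩
  obtain ⟨M, hMR, hM, hMmax⟩ := G.exists_maximum_isIndepSet_subset R
  have hMne : M.Nonempty :=
    card_pos.mp <| hMmax {r} (singleton_subset_iff.mpr hr) (by simp)
  obtain ⟨c, hc, hcmax⟩ := ih (R \ M) (sdiff_ssubset hMR hMne)
  refine ⟨fun a => if a ∈ M then 0 else c a + 1, ?_, ?_⟩
  · intro u hu v hv huv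
    by_cases huM : u ∈ M <;> by_cases hvM : v ∈ M <;> simp only [huM, hvM, if_true, if_false]
    · exact absurd huv (hM huM hvM (G.ne_of_adj huv))
    · omega
    · omega
    · exact fun h => hc u (by simp [hu, huM]) v (by simp [hv, hvM]) huv (by omega)
  · rintro (_ | j) s hsR hs hsj
    · calc #s ≤ #M := hMmax s hsR hs
        _ = _ := by
          congr 1
          ext a
          by_cases ha : a ∈ M <;> simp [ha]
          exact hMR ha
    · have hsM : ∀ a ∈ s, a ∉ M := fun a ha haM => by simpa [haM] using hsj a ha
      calc #s ≤ #{a ∈ R \ M | c a = j} :=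
            hcmax j s (fun a ha => by simp [hsR ha, hsM a ha]) hs
              (fun a ha => by simpa [hsM a ha] using hsj a ha)
        _ = _ := by
          congr 1
          ext a
          by_cases ha : a ∈ M <;> simp [ha]

end GreedyColoring

section RainbowCopy

variable {V A : Type*} {H : SimpleGraph V} {G : SimpleGraph A}

theorem Embedding.isIndepSet_image (f : H ↪g G) {s : Set V} (hs : H.IsIndepSet s) :
    G.IsIndepSet (f '' s) :=
  f.injective.injOn.pairwise_image.mpr fun v hv w hw hne => by
    simpa [Function.onFun] using hs hv hw hne

variable [Fintype A] {c : A → ℕ}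
  (hc : ∀ j, ∀ s : Finset A, G.IsIndepSet (s : Set A) → (∀ a ∈ s, j ≤ c a) →
    #s ≤ #{a | c a = j})
include hc

theorem card_filter_le_card_colorClass (f : H ↪g G) {S : Finset V}
    (hS : H.IsIndepSet (S : Set V)) (v : V) :
    #{w ∈ S | c (f v) ≤ c (f w)} ≤ #{a | c a = c (f v)} := by
  have h := hc (c (f v)) ({w ∈ S | c (f v) ≤ c (f w)}.map f.toEmbedding)
    (by
      rw [coe_map]
      exact f.isIndepSet_image (hS.mono (coe_subset.mpr (filter_subset _ _))))
    (fun a ha => by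
      obtain ⟨w, hw, rfl⟩ := mem_map.mp ha
      exact (mem_filter.mp hw).2)
  rwa [card_map] at h

theorem sum_card_part_mul_succ_div_two_le_card [Fintype V] {k : ℕ} {P : V → Fin k}
    (hP : ∀ v w, P v = P w → ¬H.Adj v w) (f : H ↪g G) (hf : Function.Injective (c ∘ f)) :
    ∑ i, #{v | P v = i} * (#{v | P v = i} + 1) / 2 ≤ Fintype.card A := by
  have hpart : ∀ i, H.IsIndepSet ({v | P v = i} : Finset V) := fun i v hv w hw _ =>
    hP v w ((mem_filter.mp hv).2.trans (mem_filter.mp hw).2.symm)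
  calc ∑ i, #{v | P v = i} * (#{v | P v = i} + 1) / 2
      = ∑ i, ∑ v ∈ {v | P v = i}, #{w ∈ {w | P w = P v} | c (f v) ≤ c (f w)} := by
        refine sum_congr rfl fun i _ => ?_
        rw [← sum_card_filter_le_eq _ hf.injOn]
        refine sum_congr rfl fun v hv => ?_
        rw [(mem_filter.mp hv).2]
        rfl
    _ = ∑ v, #{w ∈ {w | P w = P v} | c (f v) ≤ c (f w)} := sum_fiberwise univ P _
    _ ≤ ∑ v, #{a | c a = c (f v)} :=
        sum_le_sum fun v _ => card_filter_le_card_colorClass hc f (hpart (P v)) v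
    _ ≤ Fintype.card A := sum_card_fiber_comp_le_card c hf

end RainbowCopy

/-- The lexicographic product `H[Kₙ]`. -/
def cliqueBlowup {V : Type*} (H : SimpleGraph V) (n : ℕ) : SimpleGraph (V × Fin n) :=
  H.comap Prod.fst ⊔ (⊥ : SimpleGraph V) □ (⊤ : SimpleGraph (Fin n))

end SimpleGraph

theorem ArrowsR.of_iso {α α' β : Type} {G : SimpleGraph α} {G' : SimpleGraph α'}
    {H : SimpleGraph β} (h : ArrowsR G H) (e : G ≃g G') : ArrowsR G' H := by
  intro c hc
  obtain ⟨f, hf⟩ := h (c ∘ e) fun u v huv => hc _ _ (e.map_adj_iff.mpr huv)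
  exact ⟨e.toEmbedding.comp f, hf⟩

theorem arrowsR_cliqueBlowup {V : Type} [Fintype V] (H : SimpleGraph V) :
    ArrowsR (H.cliqueBlowup (Fintype.card V)) H := by
  classical
  intro c hc
  set t : V → Finset ℕ := fun v => univ.image fun b => c (v, b)
  have ht : ∀ v, #(t v) = Fintype.card V := fun v => by
    rw [card_image_of_injective _ fun a b hab => not_not.mp fun hne =>
      hc (v, a) (v, b) (by simp [SimpleGraph.cliqueBlowup, hne]) hab]
    simp
  have hhall : ∀ s : Finset V, #s ≤ #(s.biUnion t) := by
    intro s
    obtain rfl | ⟨v, hv⟩ := s.eq_empty_or_nonempty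
    · simp
    calc #s ≤ Fintype.card V := card_le_univ s
      _ = #(t v) := (ht v).symm
      _ ≤ #(s.biUnion t) := card_le_card (subset_biUnion_of_mem t hv)
  obtain ⟨r, hr, hrt⟩ := (all_card_le_biUnion_card_iff_exists_injective t).mp hhall
  choose g hg using fun v => by simpa [t] using hrt v
  refine ⟨⟨⟨fun v => (v, g v), fun v w h => congrArg Prod.fst h⟩, ?_⟩, ?_⟩
  · intro v w
    change (H.cliqueBlowup _).Adj (v, g v) (w, g w) ↔ H.Adj v w
    simp only [SimpleGraph.cliqueBlowup, SimpleGraph.sup_adj, SimpleGraph.comap_adj,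
      SimpleGraph.boxProd_adj, SimpleGraph.bot_adj, SimpleGraph.top_adj, false_and, false_or]
    exact or_iff_left_of_imp fun ⟨hne, hvw⟩ => absurd (congrArg g hvw) hne
  · intro v w h
    change c (v, g v) = c (w, g w) at h
    exact hr (by rwa [hg, hg] at h)

theorem exists_arrowsR {V : Type} [Fintype V] (H : SimpleGraph V) :
    ∃ m, ∃ G : SimpleGraph (Fin m), ArrowsR G H :=
  ⟨_, _, (arrowsR_cliqueBlowup H).of_iso (SimpleGraph.overFinIso _ rfl)⟩

theorem exists_arrowsR_rho {V : Type} [Fintype V] (H : SimpleGraph V) :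
    ∃ G : SimpleGraph (Fin (rho H)), ArrowsR G H :=
  Nat.sInf_mem (exists_arrowsR H)

/-- If the vertex set of `H` is partitioned into `k` independent sets of sizes
`x 0, …, x (k-1)`, then `ρ(H) ≥ Σ_i x_i (x_i + 1)/2`. -/
theorem stmt8 {V : Type} [Fintype V] (H : SimpleGraph V)
    (k : ℕ) (x : Fin k → ℕ) (P : V → Fin k)
    (hindep : ∀ v w : V, P v = P w → ¬ H.Adj v w)
    (hsize : ∀ i : Fin k, (Finset.univ.filter fun v => P v = i).card = x i) :
    ∑ i : Fin k, x i * (x i + 1) / 2 ≤ rho H := by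
  obtain ⟨G, hG⟩ := exists_arrowsR_rho H
  obtain ⟨c, hc_proper, hc_greedy⟩ := G.exists_greedy_coloring univ
  obtain ⟨f, hf⟩ := hG c fun u v => hc_proper u (mem_univ u) v (mem_univ v)
  have h := SimpleGraph.sum_card_part_mul_succ_div_two_le_card
    (fun j s => hc_greedy j s (subset_univ s)) hindep f hf
  simpa only [hsize, Fintype.card_fin] using h
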